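/- (Multi-particle factorization of duality function) For ℓ distinct sites i₁ < ... < i_ℓ, D(η, ξ^{(i₁,...,i_ℓ)}) = q^{4j∑_k i_k - ℓ²}/(q^{2j}-q^{-2j})^ℓ · ∏_{k=1}^ℓ (q^{2N_{i_k}(η)} - q^{2N_{i_k+1}(η)}), where ξ^{(i₁,...,i_ℓ)} is the dual configuration with one particle at each of i₁,...,i_ℓ and N_i(η) = ∑_{k≥i} η_k. -/

import Mathlib

/-- The q-number [n]_q = (q^n - q^{-n})/(q - q^{-1}). -/
noncomputable def qNum (q : ℝ) (n : ℕ) : ℝ := (q ^ n - q⁻¹ ^ n) / (q - q⁻¹)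

/-- The q-factorial [n]_q!. -/
noncomputable def qFact (q : ℝ) (n : ℕ) : ℝ := ∏ k ∈ Finset.Icc 1 n, qNum q k

/-- The q-binomial coefficient. -/
noncomputable def qBinom (q : ℝ) (n k : ℕ) : ℝ := qFact q n / (qFact q k * qFact q (n - k))

/-- N_i(η) = ∑_{k ≥ i} η_k. -/
noncomputable def Nright (η : ℤ → ℕ) (i : ℤ) : ℤ :=
  ∑ᶠ k : ℤ, if i ≤ k then (η k : ℤ) else 0

/-- The self-duality function of ASEP(q,j), with J = 2j. -/
noncomputable def Dfun (q : ℝ) (J : ℕ) (η ξ : ℤ → ℕ) : ℝ :=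
  ∏ᶠ m : ℤ,
    (qBinom q (η m) (ξ m) / qBinom q J (ξ m)) *
      q ^ (((η m : ℤ) - ξ m) * (2 * (∑ᶠ k : ℤ, if k < m then (ξ k : ℤ) else 0) + ξ m)
            + 2 * J * m * ξ m) *
      (if ξ m ≤ η m then 1 else 0)

/-!
With one dual particle per site, the factor of `Dfun` at an empty site `m` is `q^{2 η_m c_m}`,
where `c_m` counts the dual particles to the left of `m`, while at the `k`-th occupied site `i_k`
it is `q^{2 η k} · (q^{2η} - 1)/(q^J - q^{-J}) · q^{2J i_k - 2k - 1}`, because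
`[η]_q / [J]_q · q^η = (q^{2η} - 1)/(q^J - q^{-J})`. Splitting `q^{2 η_m c_m}` as
`∏_{k : i_k < m} q^{2 η_m}` and exchanging the two products, particle `k` collects
`∏_{m > i_k} q^{2 η_m} = q^{2 N_{i_k+1}}`; it remains to use
`q^{2N_i} - q^{2N_{i+1}} = q^{2N_{i+1}} (q^{2η_i} - 1)` and `∑_{k<ℓ} (2k+1) = ℓ²`.
-/

open Finset Function

section QNumbers

variable {q : ℝ}

lemma sub_inv_ne_zero (hq0 : 0 < q) (hq1 : q ≠ 1) : q - q⁻¹ ≠ 0 := by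
  intro h
  have hsq : q * q = 1 := by
    rw [sub_eq_zero] at h
    nth_rewrite 2 [h]
    exact mul_inv_cancel₀ hq0.ne'
  rcases hq1.lt_or_gt with hlt | hgt <;> nlinarith

lemma qNum_ne_zero (hq0 : 0 < q) (hq1 : q ≠ 1) {n : ℕ} (hn : n ≠ 0) : qNum q n ≠ 0 := by
  refine div_ne_zero (sub_ne_zero.2 fun h => ?_) (sub_inv_ne_zero hq0 hq1)
  exact sub_inv_ne_zero hq0 hq1
    (sub_eq_zero.2 ((pow_left_inj₀ hq0.le (inv_nonneg.2 hq0.le) hn).1 h))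

lemma qFact_ne_zero (hq0 : 0 < q) (hq1 : q ≠ 1) (n : ℕ) : qFact q n ≠ 0 :=
  prod_ne_zero_iff.2 fun k hk => qNum_ne_zero hq0 hq1 (by grind)

lemma qFact_succ (n : ℕ) : qFact q (n + 1) = qFact q n * qNum q (n + 1) :=
  prod_Icc_succ_top (by omega) _

lemma qBinom_zero_right (hq0 : 0 < q) (hq1 : q ≠ 1) (n : ℕ) : qBinom q n 0 = 1 := by
  rw [qBinom, Nat.sub_zero, show qFact q 0 = 1 by simp [qFact], one_mul,
    div_self (qFact_ne_zero hq0 hq1 n)]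

lemma qBinom_one_right (hq0 : 0 < q) (hq1 : q ≠ 1) {n : ℕ} (hn : n ≠ 0) :
    qBinom q n 1 = qNum q n := by
  obtain ⟨m, rfl⟩ := Nat.exists_eq_succ_of_ne_zero hn
  have h1 : qFact q 1 = 1 := by
    simp [qFact, qNum, div_self (sub_inv_ne_zero hq0 hq1)]
  rw [qBinom, h1, Nat.succ_sub_one, qFact_succ, one_mul,
    mul_div_cancel_left₀ _ (qFact_ne_zero hq0 hq1 m)]

lemma qNum_div_qNum (hq0 : 0 < q) (hq1 : q ≠ 1) (n J : ℕ) :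
    qNum q n / qNum q J = (q ^ (n : ℤ) - q ^ (-(n : ℤ))) / (q ^ (J : ℤ) - q ^ (-(J : ℤ))) := by
  simp only [qNum, zpow_neg, zpow_natCast, inv_pow]
  exact div_div_div_cancel_right₀ (sub_inv_ne_zero hq0 hq1) _ _

end QNumbers

section ZPow

variable {G₀ α : Type*} [CommGroupWithZero G₀] {a : G₀}

lemma prod_zpow_eq_zpow_sum (ha : a ≠ 0) (s : Finset α) (f : α → ℤ) :
    ∏ i ∈ s, a ^ f i = a ^ ∑ i ∈ s, f i := by
  classical
  induction s using Finset.induction with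
  | empty => simp
  | insert i s hi ih => rw [prod_insert hi, sum_insert hi, ih, zpow_add₀ ha]

lemma Function.HasFiniteSupport.hasFiniteMulSupport_fun_zpow (f : α → G₀) {g : α → ℤ}
    (hg : g.HasFiniteSupport) : HasFiniteMulSupport fun i => f i ^ g i :=
  hg.subset fun i hi h => hi (by simp [h])

lemma finprod_zpow_eq_zpow_finsum (ha : a ≠ 0) {f : α → ℤ} (hf : f.HasFiniteSupport) :
    ∏ᶠ i, a ^ f i = a ^ ∑ᶠ i, f i := by
  rw [finsum_eq_sum f hf, finprod_eq_prod_of_mulSupport_subset (s := hf.toFinset),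
    prod_zpow_eq_zpow_sum ha]
  exact fun i hi => Set.Finite.mem_toFinset hf |>.2 fun h => hi (by simp [h])

end ZPow

lemma sum_fin_two_mul_add_one (ℓ : ℕ) : ∑ k : Fin ℓ, (2 * (k : ℤ) + 1) = (ℓ : ℤ) ^ 2 := by
  induction ℓ with
  | zero => simp
  | succ n ih =>
    rw [Fin.sum_univ_castSucc]
    simp only [Fin.val_castSucc, Fin.val_last, ih]
    push_cast
    ring

section Nright

variable {η : ℤ → ℕ} {i : ℤ}

lemma hasFiniteSupport_Nright_summand (hfin : {k : ℤ | i ≤ k ∧ η k ≠ 0}.Finite) :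
    HasFiniteSupport fun k : ℤ => if i ≤ k then (η k : ℤ) else 0 :=
  hfin.subset fun k hk => by
    by_contra h
    exact hk (by simp_all)

lemma Nright_eq_add (hfin : {k : ℤ | i ≤ k ∧ η k ≠ 0}.Finite) :
    Nright η i = η i + Nright η (i + 1) := by
  have hsplit : ∀ k : ℤ, (if i ≤ k then (η k : ℤ) else 0)
      = (if k = i then (η i : ℤ) else 0) + (if i + 1 ≤ k then (η k : ℤ) else 0) := by
    intro k
    rcases lt_trichotomy k i with h | rfl | h
    · simp [h.not_ge, h.ne, show ¬ i + 1 ≤ k by omega]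
    · simp
    · simp [h.le, h.ne', show i + 1 ≤ k by omega]
  have hsingle : HasFiniteSupport fun k : ℤ => if k = i then (η i : ℤ) else 0 :=
    (Set.finite_singleton i).subset fun k hk => by by_contra h; exact hk (if_neg h)
  have htail : HasFiniteSupport fun k : ℤ => if i + 1 ≤ k then (η k : ℤ) else 0 :=
    hasFiniteSupport_Nright_summand (hfin.subset fun k hk => ⟨by linarith [hk.1], hk.2⟩)
  rw [Nright, finsum_congr hsplit, finsum_add_distrib hsingle htail,
    finsum_eq_single _ i fun k hk => if_neg hk, if_pos rfl, Nright]

lemma zpow_two_mul_Nright_sub {q : ℝ} (hq : q ≠ 0) (hfin : {k : ℤ | i ≤ k ∧ η k ≠ 0}.Finite) :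
    q ^ (2 * Nright η i) - q ^ (2 * Nright η (i + 1))
      = (q ^ 2) ^ Nright η (i + 1) * (q ^ (2 * (η i : ℤ)) - 1) := by
  rw [Nright_eq_add hfin, mul_add, zpow_add₀ hq, zpow_mul q 2 (Nright η (i + 1)), zpow_ofNat]
  ring

end Nright

noncomputable def leftCount (ξ : ℤ → ℕ) (m : ℤ) : ℤ := ∑ᶠ k : ℤ, if k < m then (ξ k : ℤ) else 0

noncomputable def Dfactor (q : ℝ) (J : ℕ) (η ξ : ℤ → ℕ) (m : ℤ) : ℝ :=
  (qBinom q (η m) (ξ m) / qBinom q J (ξ m)) *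
    q ^ (((η m : ℤ) - ξ m) * (2 * leftCount ξ m + ξ m) + 2 * J * m * ξ m) *
    (if ξ m ≤ η m then 1 else 0)

lemma Dfun_eq_finprod_Dfactor (q : ℝ) (J : ℕ) (η ξ : ℤ → ℕ) :
    Dfun q J η ξ = ∏ᶠ m, Dfactor q J η ξ m := rfl

-- weight of a dual particle at site `i` with `c` dual particles to its left
noncomputable def siteWeight (q : ℝ) (J : ℕ) (η : ℤ → ℕ) (i c : ℤ) : ℝ :=
  (q ^ (2 * (η i : ℤ)) - 1) / (q ^ (J : ℤ) - q ^ (-(J : ℤ))) * q ^ (2 * J * i - 2 * c - 1)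

section Dfactor

variable {q : ℝ} {J : ℕ} {η ξ : ℤ → ℕ} {m : ℤ}

lemma Dfactor_of_eq_zero (hq0 : 0 < q) (hq1 : q ≠ 1) (h : ξ m = 0) :
    Dfactor q J η ξ m = (q ^ 2) ^ ((η m : ℤ) * leftCount ξ m) := by
  rw [Dfactor, h, qBinom_zero_right hq0 hq1, qBinom_zero_right hq0 hq1, if_pos (Nat.zero_le _),
    ← zpow_ofNat, ← zpow_mul]
  push_cast
  ring_nf

lemma Dfactor_of_eq_one (hq0 : 0 < q) (hq1 : q ≠ 1) (hJ : J ≠ 0) (h : ξ m = 1) :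
    Dfactor q J η ξ m
      = (q ^ 2) ^ ((η m : ℤ) * leftCount ξ m) * siteWeight q J η m (leftCount ξ m) := by
  by_cases h0 : η m = 0
  · simp [Dfactor, siteWeight, h, h0]
  rw [Dfactor, h, qBinom_one_right hq0 hq1 h0, qBinom_one_right hq0 hq1 hJ,
    qNum_div_qNum hq0 hq1, if_pos (Nat.one_le_iff_ne_zero.2 h0), siteWeight]
  set n := η m
  set L := leftCount ξ m
  have hq : q ≠ 0 := hq0.ne'
  have hnum : q ^ (n : ℤ) - q ^ (-(n : ℤ)) = q ^ (-(n : ℤ)) * (q ^ (2 * (n : ℤ)) - 1) := by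
    rw [mul_sub, ← zpow_add₀ hq]
    ring_nf
  have hexp : q ^ (-(n : ℤ)) * q ^ (((n : ℤ) - 1) * (2 * L + 1) + 2 * J * m)
      = (q ^ 2) ^ ((n : ℤ) * L) * q ^ (2 * J * m - 2 * L - 1) := by
    rw [← zpow_ofNat, ← zpow_mul, ← zpow_add₀ hq, ← zpow_add₀ hq]
    ring_nf
  simp only [Nat.cast_one, mul_one]
  rw [hnum]
  linear_combination ((q ^ (2 * (n : ℤ)) - 1) / (q ^ (J : ℤ) - q ^ (-(J : ℤ)))) * hexp

end Dfactor

def occupied {ℓ : ℕ} (sites : Fin ℓ → ℤ) : ℤ → ℕ :=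
  fun m => if m ∈ Finset.image sites Finset.univ then 1 else 0

section Occupied

variable {ℓ : ℕ} {sites : Fin ℓ → ℤ}

lemma occupied_sites (k : Fin ℓ) : occupied sites (sites k) = 1 :=
  if_pos (mem_image_of_mem _ (mem_univ k))

lemma occupied_eq_zero {m : ℤ} (h : ∀ k, sites k ≠ m) : occupied sites m = 0 :=
  if_neg (by simpa using h)

lemma leftCount_occupied (hs : Injective sites) (m : ℤ) :
    leftCount (occupied sites) m = #{k | sites k < m} := by
  have hsupp : (support fun k : ℤ => if k < m then (occupied sites k : ℤ) else 0)
      ⊆ ↑(image sites univ) := by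
    intro k hk
    by_contra h
    have h0 : occupied sites k = 0 := if_neg (mod_cast h)
    exact hk (by simp [h0])
  rw [leftCount, finsum_eq_sum_of_support_subset _ hsupp, sum_image hs.injOn]
  simp [occupied_sites]

lemma card_filter_lt_of_strictMono (hs : StrictMono sites) (k : Fin ℓ) :
    #{j | sites j < sites k} = k := by
  simp_rw [hs.lt_iff_lt]
  rw [filter_gt_eq_Iio, Fin.card_Iio]

variable {q : ℝ} {J : ℕ} {η : ℤ → ℕ}

lemma Dfactor_occupied (hq0 : 0 < q) (hq1 : q ≠ 1) (hJ : J ≠ 0) (hs : StrictMono sites)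
    (m : ℤ) :
    Dfactor q J η (occupied sites) m
      = ∏ k, (q ^ 2) ^ (if sites k < m then (η m : ℤ) else 0) *
          (if sites k = m then siteWeight q J η (sites k) k else 1) := by
  have hcount : ∑ k, (if sites k < m then (η m : ℤ) else 0)
      = η m * leftCount (occupied sites) m := by
    simp [leftCount_occupied hs.injective, sum_ite, mul_comm]
  rw [prod_mul_distrib, prod_zpow_eq_zpow_sum (pow_ne_zero 2 hq0.ne'), hcount]
  by_cases hm : ∃ k₀, sites k₀ = m
  · obtain ⟨k₀, rfl⟩ := hm
    rw [Dfactor_of_eq_one hq0 hq1 hJ (occupied_sites k₀), leftCount_occupied hs.injective,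
      card_filter_lt_of_strictMono hs]
    simp_rw [hs.injective.eq_iff]
    rw [prod_ite_eq' univ k₀, if_pos (mem_univ _)]
  · push Not at hm
    rw [Dfactor_of_eq_zero hq0 hq1 (occupied_eq_zero hm), prod_eq_one fun k _ => if_neg (hm k),
      mul_one]

lemma Dfun_occupied (hq0 : 0 < q) (hq1 : q ≠ 1) (hJ : J ≠ 0)
    (hfin : ∀ m : ℤ, {k : ℤ | m ≤ k ∧ η k ≠ 0}.Finite) (hs : StrictMono sites) :
    Dfun q J η (occupied sites)
      = ∏ k, (q ^ 2) ^ Nright η (sites k + 1) * siteWeight q J η (sites k) k := by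
  have hright : ∀ k, HasFiniteSupport fun m => if sites k < m then (η m : ℤ) else 0 := fun k => by
    simpa only [Int.add_one_le_iff] using hasFiniteSupport_Nright_summand (hfin (sites k + 1))
  have hsite : ∀ k, HasFiniteMulSupport
      fun m => if sites k = m then siteWeight q J η (sites k) k else 1 := fun k =>
    (Set.finite_singleton (sites k)).subset fun m hm => by
      by_contra h
      exact hm (if_neg (Ne.symm h))
  rw [Dfun_eq_finprod_Dfactor, finprod_congr (Dfactor_occupied hq0 hq1 hJ hs),
    finprod_prod_comm _ _ fun k _ => ((hright k).hasFiniteMulSupport_fun_zpow _).fun_mul (hsite k)]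
  refine prod_congr rfl fun k _ => ?_
  rw [finprod_mul_distrib ((hright k).hasFiniteMulSupport_fun_zpow _) (hsite k),
    finprod_zpow_eq_zpow_finsum (pow_ne_zero 2 hq0.ne') (hright k),
    finprod_eq_single _ (sites k) fun m hm => if_neg (Ne.symm hm), if_pos rfl, Nright]
  simp only [Int.add_one_le_iff]

end Occupied

theorem stmt15_general (q : ℝ) (hq0 : 0 < q) (hq1 : q < 1) (J : ℕ) (hJ : 1 ≤ J)
    (η : ℤ → ℕ)
    (hfin : ∀ m : ℤ, {k : ℤ | m ≤ k ∧ η k ≠ 0}.Finite)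
    (ℓ : ℕ) (sites : Fin ℓ → ℤ) (hmono : StrictMono sites) :
    Dfun q J η (fun m => if m ∈ Finset.image sites Finset.univ then 1 else 0)
      = q ^ (2 * (J : ℤ) * (∑ k, sites k) - (ℓ : ℤ) ^ 2) /
          (q ^ (J : ℤ) - q ^ (-(J : ℤ))) ^ ℓ *
        ∏ k : Fin ℓ, (q ^ (2 * Nright η (sites k)) - q ^ (2 * Nright η (sites k + 1))) := by
  have hq : q ≠ 0 := hq0.ne'
  have hexp : ∏ k : Fin ℓ, q ^ (2 * (J : ℤ) * sites k - 2 * k - 1)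
      = q ^ (2 * (J : ℤ) * (∑ k, sites k) - (ℓ : ℤ) ^ 2) := by
    rw [prod_zpow_eq_zpow_sum hq, ← sum_fin_two_mul_add_one, mul_sum, ← sum_sub_distrib]
    exact congrArg _ (sum_congr rfl fun k _ => by ring)
  change Dfun q J η (occupied sites) = _
  simp_rw [Dfun_occupied hq0 hq1.ne (Nat.one_le_iff_ne_zero.1 hJ) hfin hmono, siteWeight,
    zpow_two_mul_Nright_sub hq (hfin _), ← hexp]
  rw [prod_mul_distrib, prod_mul_distrib, prod_mul_distrib, prod_div_distrib, prod_const,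
    card_univ, Fintype.card_fin]
  ring

/-- (Multi-particle factorization of the duality function) For distinct sites
i₁ < ... < i_ℓ, D(η, ξ^{(i₁,...,i_ℓ)}) = q^{4j∑ᵢ i_k - ℓ²}/(q^{2j}-q^{-2j})^ℓ ·
∏_{k=1}^ℓ (q^{2N_{i_k}(η)} - q^{2N_{i_k+1}(η)}), with J = 2j. -/
theorem stmt15 (q : ℝ) (hq0 : 0 < q) (hq1 : q < 1) (J : ℕ) (hJ : 1 ≤ J)
    (η : ℤ → ℕ) (hb : ∀ k, η k ≤ J)
    (hfin : ∀ m : ℤ, {k : ℤ | m ≤ k ∧ η k ≠ 0}.Finite)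
    (ℓ : ℕ) (sites : Fin ℓ → ℤ) (hmono : StrictMono sites) :
    Dfun q J η (fun m => if m ∈ Finset.image sites Finset.univ then 1 else 0)
      = q ^ (2 * (J : ℤ) * (∑ k, sites k) - (ℓ : ℤ) ^ 2) /
          (q ^ (J : ℤ) - q ^ (-(J : ℤ))) ^ ℓ *
        ∏ k : Fin ℓ, (q ^ (2 * Nright η (sites k)) - q ^ (2 * Nright η (sites k + 1))) :=
  stmt15_general q hq0 hq1 J hJ η hfin ℓ sites hmono
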